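/- arXiv:2309.15615 — 4 statements merged into one kernel-verified Lean document; each statement's English description precedes it below -/
import Mathlib

section
/- (Inequality (2.5) in Lemma 2.6.) Let N be a norm on ℝ². Set L = max{ N(v) : v ∈ ℝ², |v| = 1 } and l = min{ N(v) : v ∈ ℝ², |v| = 1 }, where |·| is the Euclidean norm, and let B = { v ∈ ℝ² : N(v) ≤ 1 } be the unit ball of N with two-dimensional Lebesgue measure |B|. Then (1/2) · L · l ≤ π / |B| ≤ 2 · L · l; equivalently, |B| · L · l ≤ 2π and π ≤ 2 · |B| · L · l. -/
/-!
The unit ball `B` of `N` lies between the Euclidean discs of radii `1 / L` and `1 / l`.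
If `N u = L` for a unit vector `u`, the disc of radius `1 / L` touches the boundary of `B` at
`u / L`, so the supporting line of `B` there is orthogonal to `u` and `B` lies in the slab
`|⟪u, v⟫| ≤ 1 / L`; together with the disc of radius `1 / l` this puts `B` in a rectangle of
area `4 / (L l)`. If `N w = l` for a unit vector `w` and `w'` is a unit vector orthogonal to `w`,
then `B` contains `± w / l` and `± w' / L`, hence the rhombus they span, of area `2 / (L l)`.
Thus `2 ≤ |B| L l ≤ 4`, and `3 < π ≤ 4` gives both inequalities.
-/

open MeasureTheory Set
open scoped ENNReal Real Topology RealInnerProductSpace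

noncomputable section

abbrev E2 : Type := EuclideanSpace ℝ (Fin 2)

section Seminorm

variable {E : Type*} [NormedAddCommGroup E] [InnerProductSpace ℝ E] (p : Seminorm ℝ E)

lemma Seminorm.le_mul_norm_of_forall_norm_eq_one {L : ℝ} (hL : ∀ v, ‖v‖ = 1 → p v ≤ L)
    (v : E) : p v ≤ L * ‖v‖ := by
  rcases eq_or_ne v 0 with rfl | hv
  · simp
  · have h := hL _ (norm_smul_inv_norm (𝕜 := ℝ) hv)
    rw [map_smul_eq_mul] at h
    simp only [RCLike.ofReal_real_eq_id, id, norm_inv, norm_norm] at h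
    rwa [inv_mul_le_iff₀ (norm_pos_iff.2 hv), mul_comm] at h

lemma Seminorm.mul_norm_le_of_forall_norm_eq_one {l : ℝ} (hl : ∀ v, ‖v‖ = 1 → l ≤ p v)
    (v : E) : l * ‖v‖ ≤ p v := by
  rcases eq_or_ne v 0 with rfl | hv
  · simp
  · have h := hl _ (norm_smul_inv_norm (𝕜 := ℝ) hv)
    rw [map_smul_eq_mul] at h
    simp only [RCLike.ofReal_real_eq_id, id, norm_inv, norm_norm] at h
    rwa [le_inv_mul_iff₀ (norm_pos_iff.2 hv), mul_comm] at h

lemma Seminorm.mul_inner_le_of_forall_norm_eq_one {u : E} (hu : ‖u‖ = 1)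
    (hmax : ∀ v, ‖v‖ = 1 → p v ≤ p u) (v : E) : p u * ⟪u, v⟫ ≤ p v := by
  set z := v - ⟪u, v⟫ • u
  have hz : ⟪u, z⟫ = 0 := by
    simp [z, inner_sub_right, inner_smul_right, hu]
  have hpu := apply_nonneg p u
  -- `‖u - t • z‖` exceeds `1` only at order `t²`, so comparing terms of order `t` gives the claim.
  have key : ∀ t > 0, p u * ⟪u, v⟫ ≤ p v + p u * ‖z‖ ^ 2 * t := by
    intro t ht
    have hnorm : ‖u - t • z‖ ≤ 1 + t ^ 2 * ‖z‖ ^ 2 := by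
      have hsq : ‖u - t • z‖ ^ 2 = 1 + t ^ 2 * ‖z‖ ^ 2 := by
        rw [norm_sub_sq_real, hu, inner_smul_right, hz, norm_smul, Real.norm_eq_abs, mul_pow,
          sq_abs]
        ring
      apply le_of_pow_le_pow_left₀ two_ne_zero (by positivity)
      rw [hsq]
      nlinarith [mul_nonneg (sq_nonneg t) (sq_nonneg ‖z‖)]
    have hsplit : (1 + t * ⟪u, v⟫) • u = t • v + (u - t • z) := by
      simp only [z]; module
    have hineq : (1 + t * ⟪u, v⟫) * p u ≤ t * p v + p u * (1 + t ^ 2 * ‖z‖ ^ 2) :=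
      calc (1 + t * ⟪u, v⟫) * p u ≤ p ((1 + t * ⟪u, v⟫) • u) := by
            rw [map_smul_eq_mul, Real.norm_eq_abs]
            exact mul_le_mul_of_nonneg_right (le_abs_self _) hpu
        _ ≤ p (t • v) + p (u - t • z) := by rw [hsplit]; exact map_add_le_add p _ _
        _ ≤ t * p v + p u * (1 + t ^ 2 * ‖z‖ ^ 2) := by
            rw [map_smul_eq_mul, Real.norm_of_nonneg ht.le]
            gcongr
            exact (p.le_mul_norm_of_forall_norm_eq_one hmax _).trans (by gcongr)
    nlinarith
  refine le_of_forall_pos_le_add fun ε hε => ?_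
  have hc : 0 < p u * ‖z‖ ^ 2 + 1 := by positivity
  refine (key (ε / (p u * ‖z‖ ^ 2 + 1)) (by positivity)).trans ?_
  gcongr
  rw [← mul_div_assoc, div_le_iff₀ hc]
  nlinarith

end Seminorm

lemma EuclideanSpace.volume_setOf_forall_abs_le {ι : Type*} [Fintype ι] (a : ι → ℝ) :
    volume {x : EuclideanSpace ℝ ι | ∀ i, |x i| ≤ a i} = ∏ i, ENNReal.ofReal (2 * a i) := by
  have hset : {x : EuclideanSpace ℝ ι | ∀ i, |x i| ≤ a i} =
      (MeasurableEquiv.toLp 2 (ι → ℝ)).symm ⁻¹' univ.pi fun i => Icc (-a i) (a i) := by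
    ext x
    simp only [mem_ofPred_eq, mem_preimage, MeasurableEquiv.coe_toLp_symm, mem_univ_pi, mem_Icc,
      abs_le]
  rw [hset, (EuclideanSpace.volume_preserving_symm_measurableEquiv_toLp ι).measure_preimage_equiv,
    volume_pi_pi]
  simp only [Real.volume_Icc, sub_neg_eq_add, two_mul]

lemma abs_add_abs_le_iff {α : Type*} [AddCommGroup α] [LinearOrder α] [IsOrderedAddMonoid α]
    {s t r : α} : |s| + |t| ≤ r ↔ |s + t| ≤ r ∧ |s - t| ≤ r := by
  refine ⟨fun h => ⟨(abs_add_le s t).trans h, (abs_sub s t).trans h⟩, fun ⟨h₁, h₂⟩ => ?_⟩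
  rw [abs_le] at h₁ h₂
  rcases abs_cases s with ⟨hs, -⟩ | ⟨hs, -⟩ <;> rcases abs_cases t with ⟨ht, -⟩ | ⟨ht, -⟩ <;>
    rw [hs, ht] <;> grind

lemma volume_setOf_mul_abs_add_mul_abs_le {a c : ℝ} (ha : 0 < a) (hc : 0 < c) :
    volume {x : E2 | a * |x 0| + c * |x 1| ≤ 1} = ENNReal.ofReal (2 / (a * c)) := by
  set A := Matrix.toEuclideanLin !![a, c; a, -c]
  have hA : ∀ x : E2, A x 0 = a * x 0 + c * x 1 ∧ A x 1 = a * x 0 - c * x 1 := fun x => by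
    simp [A, Matrix.mulVec, dotProduct, Fin.sum_univ_two, sub_eq_add_neg]
  have hdet : LinearMap.det A = -(2 * (a * c)) := by
    simp only [A]
    rw [Matrix.toEuclideanLin_eq_toLin_orthonormal, LinearMap.det_toLin, Matrix.det_fin_two_of]
    ring
  have hset : {x : E2 | a * |x 0| + c * |x 1| ≤ 1} = A ⁻¹' {y | ∀ i, |y i| ≤ 1} := by
    ext x
    simp only [mem_ofPred_eq, mem_preimage, Fin.forall_fin_two, (hA x).1, (hA x).2]
    rw [← abs_add_abs_le_iff, abs_mul, abs_mul, abs_of_pos ha, abs_of_pos hc]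
  have hdet_ne : LinearMap.det A ≠ 0 := by rw [hdet]; exact neg_ne_zero.2 (by positivity)
  rw [hset, Measure.addHaar_preimage_linearMap _ hdet_ne,
    EuclideanSpace.volume_setOf_forall_abs_le, hdet]
  simp only [Fin.prod_univ_two, mul_one, ← ENNReal.ofReal_mul (by positivity : (0:ℝ) ≤ 2)]
  rw [← ENNReal.ofReal_mul (abs_nonneg _), abs_inv, abs_neg, abs_of_pos (by positivity)]
  congr 1
  field_simp

lemma exists_orthonormalBasis_apply_eq {E ι : Type*} [NormedAddCommGroup E]
    [InnerProductSpace ℝ E] [FiniteDimensional ℝ E] [Fintype ι]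
    (hcard : Module.finrank ℝ E = Fintype.card ι) (i : ι) {u : E} (hu : ‖u‖ = 1) :
    ∃ b : OrthonormalBasis ι ℝ E, b i = u := by
  have hv : Orthonormal ℝ (({i} : Set ι).domRestrict fun _ => u) := by
    classical
    rw [orthonormal_iff_ite]
    rintro ⟨j, rfl⟩ ⟨k, rfl⟩
    simp [hu]
  obtain ⟨b, hb⟩ := hv.exists_orthonormalBasis_extension_of_card_eq hcard
  exact ⟨b, hb i rfl⟩

lemma OrthonormalBasis.volume_preimage_repr {ι F : Type*} [Fintype ι] [NormedAddCommGroup F]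
    [InnerProductSpace ℝ F] [FiniteDimensional ℝ F] [MeasurableSpace F] [BorelSpace F]
    (b : OrthonormalBasis ι ℝ F) (s : Set (EuclideanSpace ℝ ι)) :
    volume (b.repr ⁻¹' s) = volume s :=
  b.measurePreserving_measurableEquiv.measure_preimage_equiv s

lemma Seminorm.volume_setOf_le_one_le (p : Seminorm ℝ E2) {u : E2} (hu : ‖u‖ = 1)
    (hmax : ∀ v, ‖v‖ = 1 → p v ≤ p u) {l : ℝ} (hl : 0 < l) (hmin : ∀ v, ‖v‖ = 1 → l ≤ p v) :
    volume {v | p v ≤ 1} ≤ ENNReal.ofReal (4 / (p u * l)) := by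
  have hpu : 0 < p u := hl.trans_le (hmin u hu)
  obtain ⟨b, hb⟩ := exists_orthonormalBasis_apply_eq (E := E2) (by simp) (0 : Fin 2) hu
  have hsub : {v | p v ≤ 1} ⊆ b.repr ⁻¹' {x | ∀ i, |x i| ≤ ![1 / p u, 1 / l] i} := by
    intro v hv
    simp only [mem_ofPred_eq, mem_preimage, Fin.forall_fin_two, b.repr_apply_apply, hb,
      Matrix.cons_val_zero, Matrix.cons_val_one] at hv ⊢
    refine ⟨?_, ?_⟩
    · have h₁ := p.mul_inner_le_of_forall_norm_eq_one hu hmax v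
      have h₂ := p.mul_inner_le_of_forall_norm_eq_one hu hmax (-v)
      rw [map_neg_eq_map, inner_neg_right] at h₂
      rw [le_div_iff₀ hpu]
      rcases abs_cases ⟪u, v⟫ with ⟨h, -⟩ | ⟨h, -⟩ <;> rw [h] <;> linarith
    · calc |⟪b 1, v⟫| ≤ ‖b 1‖ * ‖v‖ := abs_real_inner_le_norm _ _
        _ = ‖v‖ := by rw [b.orthonormal.1 1, one_mul]
        _ ≤ 1 / l := by
          rw [le_div_iff₀ hl, mul_comm]
          exact (p.mul_norm_le_of_forall_norm_eq_one hmin v).trans hv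
  calc volume {v | p v ≤ 1}
      ≤ volume (b.repr ⁻¹' {x | ∀ i, |x i| ≤ ![1 / p u, 1 / l] i}) := measure_mono hsub
    _ = ENNReal.ofReal (2 * (1 / p u)) * ENNReal.ofReal (2 * (1 / l)) := by
      rw [b.volume_preimage_repr, EuclideanSpace.volume_setOf_forall_abs_le, Fin.prod_univ_two]
      rfl
    _ = ENNReal.ofReal (4 / (p u * l)) := by
      rw [← ENNReal.ofReal_mul (by positivity)]
      congr 1
      field_simp
      norm_num

lemma Seminorm.le_volume_setOf_le_one (p : Seminorm ℝ E2) {w : E2} (hw : ‖w‖ = 1)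
    (hpw : 0 < p w) {L : ℝ} (hmax : ∀ v, ‖v‖ = 1 → p v ≤ L) :
    ENNReal.ofReal (2 / (L * p w)) ≤ volume {v | p v ≤ 1} := by
  have hL : 0 < L := hpw.trans_le (hmax w hw)
  obtain ⟨b, hb⟩ := exists_orthonormalBasis_apply_eq (E := E2) (by simp) (0 : Fin 2) hw
  have hsub : b.repr ⁻¹' {x | p w * |x 0| + L * |x 1| ≤ 1} ⊆ {v | p v ≤ 1} := by
    intro v hv
    simp only [mem_ofPred_eq, mem_preimage] at hv ⊢
    calc p v = p (b.repr v 0 • b 0 + b.repr v 1 • b 1) := by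
          rw [← Fin.sum_univ_two (fun i => b.repr v i • b i), b.sum_repr]
      _ ≤ |b.repr v 0| * p (b 0) + |b.repr v 1| * p (b 1) := by
          refine (map_add_le_add p _ _).trans_eq ?_
          rw [map_smul_eq_mul, map_smul_eq_mul, Real.norm_eq_abs, Real.norm_eq_abs]
      _ ≤ |b.repr v 0| * p w + |b.repr v 1| * L := by
          rw [hb]
          gcongr
          exact hmax _ (b.orthonormal.1 1)
      _ ≤ 1 := by linarith
  calc ENNReal.ofReal (2 / (L * p w))
      = volume {x : E2 | p w * |x 0| + L * |x 1| ≤ 1} := by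
        rw [volume_setOf_mul_abs_add_mul_abs_le hpw hL, mul_comm]
    _ = volume (b.repr ⁻¹' {x | p w * |x 0| + L * |x 1| ≤ 1}) :=
        (b.volume_preimage_repr _).symm
    _ ≤ volume {v | p v ≤ 1} := measure_mono hsub

lemma pi_bounds_of_two_div_le_of_le_four_div {μ : ℝ≥0∞} {k : ℝ} (hk : 0 < k)
    (hlow : ENNReal.ofReal (2 / k) ≤ μ) (hup : μ ≤ ENNReal.ofReal (4 / k)) :
    (1 / 2) * k ≤ π / μ.toReal ∧ π / μ.toReal ≤ 2 * k ∧
      μ.toReal * k ≤ 2 * π ∧ π ≤ 2 * (μ.toReal * k) := by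
  have hV₁ : 2 / k ≤ μ.toReal :=
    (ENNReal.ofReal_le_iff_le_toReal (ne_top_of_le_ne_top ENNReal.ofReal_ne_top hup)).1 hlow
  have hV₂ : μ.toReal ≤ 4 / k := ENNReal.toReal_le_of_le_ofReal (by positivity) hup
  have hV : 0 < μ.toReal := lt_of_lt_of_le (by positivity) hV₁
  rw [div_le_iff₀ hk] at hV₁
  rw [le_div_iff₀ hk] at hV₂
  have := Real.pi_gt_three
  have := Real.pi_le_four
  refine ⟨?_, ?_, by linarith, by linarith⟩
  · rw [le_div_iff₀ hV]; linarith
  · rw [div_le_iff₀ hV]; linarith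

/-- **Inequality (2.5) in Lemma 2.6 (John ellipse estimate).** For a norm `N` on `ℝ²`
with maximal stretch `L` and minimal stretch `l` on the Euclidean unit circle, and unit
ball `B = {N ≤ 1}`, one has `(1/2)·L·l ≤ π/|B| ≤ 2·L·l`; equivalently
`|B|·L·l ≤ 2π` and `π ≤ 2·|B|·L·l`. -/
theorem john_ellipse_area_bounds
    (N : E2 → ℝ)
    (hNhom : ∀ (a : ℝ) (v : E2), N (a • v) = |a| * N v)
    (hNadd : ∀ v w : E2, N (v + w) ≤ N v + N w)
    (hNzero : ∀ v : E2, N v = 0 ↔ v = 0)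
    (L l : ℝ)
    (hL : IsGreatest (N '' {v : E2 | ‖v‖ = 1}) L)
    (hl : IsLeast (N '' {v : E2 | ‖v‖ = 1}) l)
    (B : Set E2) (hB : B = {v : E2 | N v ≤ 1}) :
    (1 / 2) * (L * l) ≤ π / (volume B).toReal ∧
    π / (volume B).toReal ≤ 2 * (L * l) ∧
    (volume B).toReal * (L * l) ≤ 2 * π ∧
    π ≤ 2 * ((volume B).toReal * (L * l)) := by
  let p : Seminorm ℝ E2 := Seminorm.of N hNadd hNhom
  obtain ⟨u, hu, rfl⟩ := hL.1
  obtain ⟨w, hw, rfl⟩ := hl.1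
  have hmax : ∀ v : E2, ‖v‖ = 1 → p v ≤ p u := fun v hv => hL.2 ⟨v, hv, rfl⟩
  have hmin : ∀ v : E2, ‖v‖ = 1 → p w ≤ p v := fun v hv => hl.2 ⟨v, hv, rfl⟩
  have hpw : 0 < p w := (apply_nonneg p w).lt_of_ne fun h =>
    by simp [(hNzero w).1 h.symm] at hw
  subst hB
  exact pi_bounds_of_two_div_le_of_le_four_div (mul_pos (hpw.trans_le (hmin u hu)) hpw)
    (p.le_volume_setOf_le_one hw hpw hmax) (p.volume_setOf_le_one_le hu hmax hpw hmin)
end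
end

section
/- (Admissibility part of Lemma 4.7.) Define g₁ : ℝ² → [0,∞] by g₁(y) = ( |y| · log(1/|y|) · log(log(1/|y|)) )⁻¹ when 0 < |y| < e⁻², g₁(0) = ∞, and g₁(y) = 0 when |y| ≥ e⁻². Then for every 1-Lipschitz curve γ : [0, e⁻²] → ℝ² with γ(0) = 0, one has ∫₀^{e⁻²} g₁(γ(t)) dt = ∞ (integral taken in [0,∞]). Consequently, for every ε > 0 the function g_ε = ε · g₁ satisfies ∫_γ g_ε ds = ∞ ≥ 1 along every rectifiable curve joining 0 to the circle {|y| = e⁻²}, parametrized by arclength. -/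
/-!
A 1-Lipschitz curve from the origin satisfies `|γ(t)| ≤ t`, and `x ↦ x log(1/x) log log(1/x)` is
increasing on `(0, e⁻³]` (its derivative is `(L - 1) log L - 1` with `L = log(1/x) ≥ 3`; it is not
monotone up to `e⁻²`). Hence `g₁(γ(t)) ≥ 1/(t log(1/t) log log(1/t))` for `t ≤ e⁻³`, and the right-hand
side has the antiderivative `-log log log(1/t)`, which tends to `-∞` as `t → 0⁺`.
-/

open MeasureTheory Set
open scoped ENNReal Real Topology

noncomputable section

open Real Filter

lemma lintegral_Ioc_ofReal_deriv_eq_top {G g : ℝ → ℝ} {a b : ℝ} (hab : a < b)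
    (hderiv : ∀ x ∈ Ioc a b, HasDerivAt G (g x) x) (hg : ∀ x ∈ Ioc a b, 0 ≤ g x)
    (hG : Tendsto G (𝓝[>] a) atBot) :
    ∫⁻ x in Ioc a b, ENNReal.ofReal (g x) = ⊤ := by
  refine ENNReal.eq_top_of_forall_nnreal_le fun r => ?_
  obtain ⟨a', ⟨ha', ha'b⟩, hGa'⟩ :=
    (Eventually.and (Ioo_mem_nhdsGT hab) (hG.eventually (eventually_lt_atBot (G b - r)))).exists
  have hsub : Icc a' b ⊆ Ioc a b := Icc_subset_Ioc_iff ha'b.le |>.2 ⟨ha', le_rfl⟩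
  have hcont : ContinuousOn G (Icc a' b) := fun x hx =>
    (hderiv x (hsub hx)).continuousAt.continuousWithinAt
  have hderiv' : ∀ x ∈ Ioo a' b, HasDerivAt G (g x) x := fun x hx =>
    hderiv x (hsub (Ioo_subset_Icc_self hx))
  have hint : IntegrableOn g (Ioc a' b) := intervalIntegral.integrableOn_deriv_of_nonneg hcont
    hderiv' fun x hx => hg x (hsub (Ioo_subset_Icc_self hx))
  have hftc : ∫ x in Ioc a' b, g x = G b - G a' := by
    rw [← intervalIntegral.integral_of_le ha'b.le]
    exact intervalIntegral.integral_eq_sub_of_hasDerivAt_of_le ha'b.le hcont hderiv'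
      ((intervalIntegrable_iff_integrableOn_Ioc_of_le ha'b.le).2 hint)
  calc (r : ℝ≥0∞) ≤ ENNReal.ofReal (G b - G a') := by
        rw [← ENNReal.ofReal_coe_nnreal]; exact ENNReal.ofReal_le_ofReal (by linarith)
    _ = ∫⁻ x in Ioc a' b, ENNReal.ofReal (g x) := by
        rw [← hftc, ofReal_integral_eq_lintegral_ofReal hint]
        exact (ae_restrict_iff' measurableSet_Ioc).2
          (Eventually.of_forall fun x hx => hg x (Ioc_subset_Ioc_left ha'.le hx))
    _ ≤ ∫⁻ x in Ioc a b, ENNReal.ofReal (g x) := lintegral_mono_set (Ioc_subset_Ioc_left ha'.le)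

lemma norm_le_of_lipschitzOnWith_one {E : Type*} [SeminormedAddCommGroup E] {γ : ℝ → E}
    {c t : ℝ} (hγ : LipschitzOnWith 1 γ (Icc 0 c)) (hγ0 : γ 0 = 0) (ht : t ∈ Icc 0 c) :
    ‖γ t‖ ≤ t := by
  simpa [hγ0, dist_eq_norm, abs_of_nonneg ht.1] using
    hγ.dist_le_mul t ht 0 ⟨le_rfl, ht.1.trans ht.2⟩

def xLogLog (x : ℝ) : ℝ := x * log (1 / x) * log (log (1 / x))

lemma xLogLog_eq (x : ℝ) : xLogLog x = x * (-log x) * log (-log x) := by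
  simp [xLogLog, one_div, log_inv]

lemma three_le_neg_log_and_one_le_log_neg_log {x : ℝ} (hx : 0 < x) (hx3 : x ≤ exp (-3)) :
    3 ≤ -log x ∧ 1 ≤ log (-log x) := by
  have h3 : 3 ≤ -log x := by
    have := log_le_log hx hx3; rw [log_exp] at this; linarith
  refine ⟨h3, ?_⟩
  calc (1 : ℝ) = log (exp 1) := (log_exp 1).symm
    _ ≤ log (-log x) := log_le_log (exp_pos 1) ((exp_one_lt_d9.trans (by norm_num)).le.trans h3)

lemma xLogLog_pos {x : ℝ} (hx : 0 < x) (hx3 : x ≤ exp (-3)) : 0 < xLogLog x := by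
  obtain ⟨h3, h1⟩ := three_le_neg_log_and_one_le_log_neg_log hx hx3
  rw [xLogLog_eq]
  positivity

lemma hasDerivAt_xLogLog {x : ℝ} (hx : 0 < x) (hx1 : x < 1) :
    HasDerivAt xLogLog ((-log x - 1) * log (-log x) - 1) x := by
  have hL : 0 < -log x := neg_pos.2 (log_neg hx hx1)
  have hneg : HasDerivAt (fun y => -log y) (-x⁻¹) x := (hasDerivAt_log hx.ne').neg
  rw [show xLogLog = fun y => y * (-log y) * log (-log y) from funext xLogLog_eq]
  refine (((hasDerivAt_id' x).mul hneg).mul (hneg.log hL.ne')).congr_deriv ?_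
  have hlog : log x ≠ 0 := (neg_pos.1 hL).ne
  simp only [Pi.mul_apply]
  field_simp
  ring

lemma monotoneOn_xLogLog : MonotoneOn xLogLog (Ioc 0 (exp (-3))) := by
  have hlt1 : ∀ x ∈ Ioc (0 : ℝ) (exp (-3)), x < 1 := fun x hx =>
    hx.2.trans_lt (exp_lt_one_iff.2 (by norm_num))
  have hderiv : ∀ x ∈ Ioc (0 : ℝ) (exp (-3)), HasDerivAt xLogLog _ x := fun x hx =>
    hasDerivAt_xLogLog hx.1 (hlt1 x hx)
  refine monotoneOn_of_deriv_nonneg (convex_Ioc 0 _)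
    (fun x hx => (hderiv x hx).continuousAt.continuousWithinAt)
    (fun x hx => (hderiv x (interior_subset hx)).differentiableAt.differentiableWithinAt)
    fun x hx => ?_
  obtain ⟨h3, h1⟩ := three_le_neg_log_and_one_le_log_neg_log (interior_subset hx).1
    (interior_subset hx).2
  rw [(hderiv x (interior_subset hx)).deriv]
  nlinarith

lemma hasDerivAt_neg_log_log_neg_log {x : ℝ} (hx : 0 < x) (hx3 : x ≤ exp (-3)) :
    HasDerivAt (fun y => -log (log (-log y))) (xLogLog x)⁻¹ x := by
  obtain ⟨h3, h1⟩ := three_le_neg_log_and_one_le_log_neg_log hx hx3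
  have hneg : HasDerivAt (fun y => -log y) (-x⁻¹) x := (hasDerivAt_log hx.ne').neg
  refine ((hneg.log (by linarith)).log (by linarith)).neg.congr_deriv ?_
  rw [xLogLog_eq]
  field_simp

lemma tendsto_neg_log_log_neg_log : Tendsto (fun y => -log (log (-log y))) (𝓝[>] 0) atBot :=
  tendsto_neg_atTop_atBot.comp <| tendsto_log_atTop.comp <| tendsto_log_atTop.comp <|
    tendsto_neg_atBot_atTop.comp tendsto_log_nhdsGT_zero

lemma lintegral_inv_xLogLog_eq_top :
    ∫⁻ t in Ioc 0 (exp (-3)), ENNReal.ofReal (xLogLog t)⁻¹ = ⊤ :=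
  lintegral_Ioc_ofReal_deriv_eq_top (exp_pos _)
    (fun _ hx => hasDerivAt_neg_log_log_neg_log hx.1 hx.2)
    (fun _ hx => (inv_pos.2 (xLogLog_pos hx.1 hx.2)).le) tendsto_neg_log_log_neg_log

def logLogWeight {E : Type*} [Norm E] (y : E) : ℝ≥0∞ :=
  if ‖y‖ = 0 then ⊤
  else if ‖y‖ < exp (-2) then ENNReal.ofReal (xLogLog ‖y‖)⁻¹
  else 0

lemma ofReal_inv_xLogLog_le_logLogWeight {E : Type*} [SeminormedAddGroup E] {y : E} {t : ℝ}
    (ht : t ∈ Ioc 0 (exp (-3))) (hy : ‖y‖ ≤ t) :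
    ENNReal.ofReal (xLogLog t)⁻¹ ≤ logLogWeight y := by
  unfold logLogWeight
  split_ifs with h0 h2
  · exact le_top
  · have hpos : 0 < ‖y‖ := lt_of_le_of_ne (norm_nonneg y) (Ne.symm h0)
    have hy3 : ‖y‖ ∈ Ioc 0 (exp (-3)) := ⟨hpos, hy.trans ht.2⟩
    exact ENNReal.ofReal_le_ofReal <| inv_anti₀ (xLogLog_pos hpos hy3.2)
      (monotoneOn_xLogLog hy3 ht hy)
  · exact absurd ((hy.trans ht.2).trans_lt (exp_lt_exp.2 (by norm_num))) h2

lemma lintegral_logLogWeight_comp_eq_top {E : Type*} [SeminormedAddCommGroup E] {γ : ℝ → E}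
    {c : ℝ} (hc : exp (-3) ≤ c) (hγ : LipschitzOnWith 1 γ (Icc 0 c)) (hγ0 : γ 0 = 0) :
    ∫⁻ t in Icc 0 c, logLogWeight (γ t) = ⊤ := by
  have hsub : Ioc 0 (exp (-3)) ⊆ Icc 0 c := fun t ht => ⟨ht.1.le, ht.2.trans hc⟩
  rw [← top_le_iff, ← lintegral_inv_xLogLog_eq_top]
  calc ∫⁻ t in Ioc 0 (exp (-3)), ENNReal.ofReal (xLogLog t)⁻¹
      ≤ ∫⁻ t in Ioc 0 (exp (-3)), logLogWeight (γ t) :=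
        setLIntegral_mono_ae' measurableSet_Ioc <| Eventually.of_forall fun t ht =>
          ofReal_inv_xLogLog_le_logLogWeight ht (norm_le_of_lipschitzOnWith_one hγ hγ0 (hsub ht))
    _ ≤ ∫⁻ t in Icc 0 c, logLogWeight (γ t) := lintegral_mono_set hsub

/-- **Admissibility part of Lemma 4.7.** The function
`g₁(y) = (|y| log(1/|y|) log log(1/|y|))⁻¹` on the punctured disc of radius `e⁻²`
(with `g₁(0) = ∞` and `g₁ = 0` outside) has infinite line integral along every
1-Lipschitz curve starting at the origin; consequently every positive multiple
`g_ε = ε g₁` has infinite (hence `≥ 1`) line integral along every arclength-parametrized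
rectifiable curve joining `0` to the circle of radius `e⁻²`. -/
theorem g_one_admissible
    (g₁ : E2 → ℝ≥0∞)
    (hg₁ : ∀ y : E2, g₁ y =
      if ‖y‖ = 0 then ⊤
      else if ‖y‖ < Real.exp (-2) then
        ENNReal.ofReal ((‖y‖ * Real.log (1 / ‖y‖) * Real.log (Real.log (1 / ‖y‖)))⁻¹)
      else 0) :
    (∀ γ : ℝ → E2, LipschitzOnWith 1 γ (Icc 0 (Real.exp (-2))) → γ 0 = 0 →
      ∫⁻ t in Icc (0 : ℝ) (Real.exp (-2)), g₁ (γ t) = ⊤) ∧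
    (∀ ε : ℝ, 0 < ε → ∀ L : ℝ, 0 ≤ L → ∀ γ : ℝ → E2,
      LipschitzOnWith 1 γ (Icc 0 L) → γ 0 = 0 → ‖γ L‖ = Real.exp (-2) →
      ∫⁻ t in Icc (0 : ℝ) L, ENNReal.ofReal ε * g₁ (γ t) = ⊤ ∧
      (1 : ℝ≥0∞) ≤ ∫⁻ t in Icc (0 : ℝ) L, ENNReal.ofReal ε * g₁ (γ t)) := by
  obtain rfl : g₁ = logLogWeight := funext hg₁
  have he : exp (-3) ≤ exp (-2) := exp_le_exp.2 (by norm_num)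
  refine ⟨fun γ hγ hγ0 => lintegral_logLogWeight_comp_eq_top he hγ hγ0,
    fun ε hε L hL γ hγ hγ0 hγL => ?_⟩
  have hL3 : exp (-3) ≤ L := he.trans (hγL ▸ norm_le_of_lipschitzOnWith_one hγ hγ0 ⟨hL, le_rfl⟩)
  have htop : ∫⁻ t in Icc 0 L, ENNReal.ofReal ε * logLogWeight (γ t) = ⊤ := by
    rw [lintegral_const_mul' _ _ ENNReal.ofReal_ne_top,
      lintegral_logLogWeight_comp_eq_top hL3 hγ hγ0, ENNReal.mul_top (by positivity)]
  exact ⟨htop, htop ▸ le_top⟩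
end
end

section
/- (Second part of Lemma 4.7.) For ε > 0 define g_ε : ℝ² → [0,∞) by g_ε(y) = ε · ( |y| · log(1/|y|) · log(log(1/|y|)) )⁻¹ when 0 < |y| < e⁻², and g_ε(y) = 0 otherwise. Then the function y ↦ ( |y|² · log(1/|y|) · (log(log(1/|y|)))² )⁻¹ is Lebesgue integrable over the punctured disc { y ∈ ℝ² : 0 < |y| < e⁻² }, and consequently ∫_{ℝ²} g_ε(y)² · log(1/|y|) dy → 0 as ε → 0⁺. -/
/-!
In polar coordinates the integrand becomes `(r log(1/r) (log log(1/r))²)⁻¹ dr` on `(0, e⁻²)`,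
which is the derivative of `(log log(1/r))⁻¹`; this antiderivative tends to `0` as `r → 0⁺`,
so the integral is finite. On the punctured disc `g_ε² log(1/|y|)` is `ε²` times the integrand,
hence the weighted integral is `ε²` times a finite constant.
-/

open MeasureTheory Set Filter
open scoped ENNReal Real Topology

noncomputable section

open Real

lemma one_lt_log_one_div {r : ℝ} (h0 : 0 < r) (hr : r < exp (-1)) : 1 < log (1 / r) := by
  have := log_lt_log h0 hr
  rw [log_exp] at this
  rw [one_div, log_inv]
  linarith

lemma hasDerivAt_inv_log_log_one_div {r : ℝ} (h0 : 0 < r) (hr : r < exp (-1)) :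
    HasDerivAt (fun x => (log (log (1 / x)))⁻¹)
      (r * log (1 / r) * log (log (1 / r)) ^ 2)⁻¹ r := by
  have hlog := one_lt_log_one_div h0 hr
  have hloglog : 0 < log (log (1 / r)) := log_pos hlog
  have hinv : HasDerivAt (fun x : ℝ => 1 / x) (-(r ^ 2)⁻¹) r := by
    simpa only [one_div] using hasDerivAt_inv h0.ne'
  refine (((hinv.log (by positivity)).log (by positivity)).fun_inv hloglog.ne').congr_deriv ?_
  field_simp

lemma tendsto_inv_log_log_one_div :
    Tendsto (fun x => (log (log (1 / x)))⁻¹) (𝓝[>] 0) (𝓝 0) := by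
  have h : Tendsto (fun x : ℝ => 1 / x) (𝓝[>] 0) atTop := by
    simpa only [one_div] using tendsto_inv_nhdsGT_zero
  exact (tendsto_log_atTop.comp (tendsto_log_atTop.comp h)).inv_tendsto_atTop

lemma continuousOn_inv_log_log_one_div {a : ℝ} (ha : a < exp (-1)) :
    ContinuousOn (fun x => (log (log (1 / x)))⁻¹) (Icc 0 a) := by
  rintro x ⟨hx0, hxa⟩
  rcases hx0.eq_or_lt with rfl | hx0
  · refine (continuousWithinAt_Ioi_iff_Ici.1 ?_).mono Icc_subset_Ici_self
    simpa [ContinuousWithinAt] using tendsto_inv_log_log_one_div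
  · have hlog := one_lt_log_one_div hx0 (hxa.trans_lt ha)
    have hinv : ContinuousAt (fun x : ℝ => 1 / x) x := by
      simpa only [one_div] using continuousAt_inv₀ hx0.ne'
    exact ((((continuousAt_log (by positivity)).comp hinv).log (by positivity)).inv₀
      (log_pos hlog).ne').continuousWithinAt

lemma integrableOn_inv_mul_log_mul_log_log_sq {a : ℝ} (ha : a < exp (-1)) :
    IntegrableOn (fun r => (r * log (1 / r) * log (log (1 / r)) ^ 2)⁻¹) (Ioc 0 a) := by
  refine intervalIntegral.integrableOn_deriv_of_nonneg (continuousOn_inv_log_log_one_div ha)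
    (fun r hr => hasDerivAt_inv_log_log_one_div hr.1 (hr.2.trans ha)) fun r hr => ?_
  have hlog := one_lt_log_one_div hr.1 (hr.2.trans ha)
  have := log_pos hlog
  have := hr.1
  positivity

lemma integrableOn_ball_inv_sq_mul_log_mul_log_log_sq {a : ℝ} (ha : a < exp (-1)) :
    IntegrableOn (fun y : E2 => (‖y‖ ^ 2 * log (1 / ‖y‖) * log (log (1 / ‖y‖)) ^ 2)⁻¹)
      (Metric.ball 0 a) := by
  rw [integrableOn_fun_norm_addHaar volume
      (f := fun r => (r ^ 2 * log (1 / r) * log (log (1 / r)) ^ 2)⁻¹),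
    finrank_euclideanSpace_fin]
  refine ((integrableOn_inv_mul_log_mul_log_log_sq ha).mono_set Ioo_subset_Ioc_self).congr_fun
    (fun r hr => ?_) measurableSet_Ioo
  have := hr.1.ne'
  have := (log_pos (one_lt_log_one_div hr.1 (hr.2.trans ha))).ne'
  simp only [Nat.reduceSub, pow_one, smul_eq_mul]
  field_simp

lemma tendsto_lintegral_ofReal_sq_mul_nhds_zero {α : Type*} [MeasurableSpace α] {μ : Measure α}
    {h : α → ℝ} (hi : Integrable h μ) (hnn : 0 ≤ h) :
    Tendsto (fun ε : ℝ => ∫⁻ x, ENNReal.ofReal (ε ^ 2 * h x) ∂μ) (𝓝 0) (𝓝 0) := by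
  have hlint : ∀ ε : ℝ, ∫⁻ x, ENNReal.ofReal (ε ^ 2 * h x) ∂μ =
      ENNReal.ofReal (ε ^ 2 * ∫ x, h x ∂μ) := fun ε => by
    rw [← integral_const_mul, ofReal_integral_eq_lintegral_ofReal (hi.const_mul _)
      (.of_forall fun x => mul_nonneg (sq_nonneg ε) (hnn x))]
  simp_rw [hlint]
  have hcont : Continuous fun ε : ℝ => ENNReal.ofReal (ε ^ 2 * ∫ x, h x ∂μ) :=
    ENNReal.continuous_ofReal.comp ((continuous_pow 2).mul continuous_const)
  simpa using hcont.tendsto 0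

/-- **Second part of Lemma 4.7.** The function
`y ↦ (|y|² log(1/|y|) (log log(1/|y|))²)⁻¹` is integrable on the punctured disc
`{0 < |y| < e⁻²}`, and consequently `∫ g_ε² log(1/|y|) dy → 0` as `ε → 0⁺`, where
`g_ε(y) = ε (|y| log(1/|y|) log log(1/|y|))⁻¹` on the punctured disc and `0` elsewhere. -/
theorem g_eps_weighted_L2_tendsto_zero
    (g : ℝ → E2 → ℝ)
    (hg : ∀ (ε : ℝ) (y : E2), g ε y =
      if 0 < ‖y‖ ∧ ‖y‖ < Real.exp (-2) then
        ε * (‖y‖ * Real.log (1 / ‖y‖) * Real.log (Real.log (1 / ‖y‖)))⁻¹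
      else 0) :
    IntegrableOn
      (fun y : E2 =>
        (‖y‖ ^ 2 * Real.log (1 / ‖y‖) * (Real.log (Real.log (1 / ‖y‖))) ^ 2)⁻¹)
      {y : E2 | 0 < ‖y‖ ∧ ‖y‖ < Real.exp (-2)} volume ∧
    Tendsto (fun ε : ℝ =>
        ∫⁻ y : E2, ENNReal.ofReal ((g ε y) ^ 2 * Real.log (1 / ‖y‖)))
      (𝓝[>] 0) (𝓝 0) := by
  set S := {y : E2 | 0 < ‖y‖ ∧ ‖y‖ < exp (-2)}
  set f := fun y : E2 => (‖y‖ ^ 2 * log (1 / ‖y‖) * log (log (1 / ‖y‖)) ^ 2)⁻¹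
  have ha : exp (-2) < exp (-1) := exp_lt_exp.2 (by norm_num)
  have hf : IntegrableOn f S :=
    (integrableOn_ball_inv_sq_mul_log_mul_log_log_sq ha).mono_set
      fun y hy => mem_ball_zero_iff.2 hy.2
  refine ⟨hf, ?_⟩
  have hg_sq : ∀ ε y, g ε y ^ 2 * log (1 / ‖y‖) = ε ^ 2 * S.indicator f y := by
    intro ε y
    by_cases hy : 0 < ‖y‖ ∧ ‖y‖ < exp (-2)
    · rw [hg, if_pos hy, indicator_of_mem (s := S) hy]
      have := hy.1.ne'
      have := (log_pos (one_lt_log_one_div hy.1 (hy.2.trans ha))).ne'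
      simp only [f]
      field_simp
    · rw [hg, if_neg hy, indicator_of_notMem (s := S) hy]
      ring
  have hf_nonneg : 0 ≤ S.indicator f := indicator_nonneg fun y hy => by
    have hlog := one_lt_log_one_div hy.1 (hy.2.trans ha)
    have := log_pos hlog
    have := hy.1
    positivity
  simp_rw [hg_sq]
  exact (tendsto_lintegral_ofReal_sq_mul_nhds_zero
    ((integrable_indicator_iff (measurable_norm measurableSet_Ioo)).2 hf) hf_nonneg).mono_left
    nhdsWithin_le_nhds
end
end

section
/- (Basic properties of Ball's map, from the proof of Proposition 6.1.) Define η : ℝ² → ℝ by η(x,y) = |x|·y if |x| ≤ 1 and |y| ≤ 1; η(x,y) = (2(|y|−1) + |x|(2−|y|)) · sign(y) if |x| ≤ 1 and 1 ≤ |y| ≤ 2; and η(x,y) = y otherwise; and let f₀ : ℝ² → ℝ² be f₀(x,y) = (x, η(x,y)). Then: (a) f₀ is Lipschitz; (b) f₀(x,y) = (x,y) whenever |x| ≥ 1 or |y| ≥ 2; (c) f₀⁻¹({(0,0)}) = {0} × [−1,1], so the fiber of f₀ over the origin is a nondegenerate segment and f₀ is not discrete; (d) at every point (x,y) with 0 <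 |x| < 1 and |y| < 1, f₀ is differentiable, det Df₀(x,y) = |x|, and ‖Df₀(x,y)‖² ≤ 3, where ‖·‖ is the operator norm of the derivative; in particular ‖Df₀(x,y)‖² ≤ (3/|x|) · det Df₀(x,y) at all such points. -/
open MeasureTheory Set
open scoped ENNReal NNReal Real Topology

noncomputable section

/-! ### Auxiliary definitions and lemmas for the closed form of `η` -/

def aa (x : ℝ) : ℝ := min |x| 1
def zz (y : ℝ) : ℝ := max (-2) (min 2 y)

def ballF (x y : ℝ) : ℝ :=
  (y - zz y) + min (max (aa x * zz y) ((2 - aa x) * zz y - 2 * (1 - aa x)))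
    (max (min (aa x * zz y) ((2 - aa x) * zz y + 2 * (1 - aa x))) (zz y))

lemma aa_mem (x : ℝ) : 0 ≤ aa x ∧ aa x ≤ 1 :=
  ⟨le_min (abs_nonneg x) one_pos.le, min_le_right _ _⟩

lemma zz_mem (y : ℝ) : -2 ≤ zz y ∧ zz y ≤ 2 :=
  ⟨le_max_left _ _, max_le (by norm_num) (min_le_left _ _)⟩

lemma aa_lip (x x' : ℝ) : |aa x - aa x'| ≤ |x - x'| := by
  refine (abs_min_sub_min_le_max _ _ _ _).trans ?_
  simp only [sub_self, abs_zero]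
  exact max_le (abs_abs_sub_abs_le_abs_sub x x') (abs_nonneg _)

lemma zz_lip (y y' : ℝ) : |zz y - zz y'| ≤ |y - y'| := by
  refine (abs_max_sub_max_le_max _ _ _ _).trans ?_
  simp only [sub_self, abs_zero]
  refine max_le (abs_nonneg _) ((abs_min_sub_min_le_max _ _ _ _).trans ?_)
  simp only [sub_self, abs_zero]
  exact max_le (abs_nonneg _) le_rfl

lemma eta_cf (x y : ℝ) :
    (if |x| ≤ 1 ∧ |y| ≤ 1 then |x| * y
     else if |x| ≤ 1 ∧ |y| ≤ 2 then (2 * (|y| - 1) + |x| * (2 - |y|)) * Real.sign y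
     else y) = ballF x y := by
  have hx0 : (0:ℝ) ≤ |x| := abs_nonneg x
  rcases le_or_gt |x| 1 with hx | hx
  · have ha : aa x = |x| := min_eq_left hx
    set A := |x| with hA
    rcases le_or_gt |y| 1 with hy | hy
    · have hy' := abs_le.mp hy
      have hz : zz y = y := by
        rw [zz, min_eq_right (by linarith), max_eq_right (by linarith)]
      rw [if_pos ⟨hx, hy⟩, ballF, ha, hz]
      have e1 : max (A * y) ((2 - A) * y - 2 * (1 - A)) = A * y :=
        max_eq_left (by nlinarith [hy'.1, hy'.2])
      have e2 : min (A * y) ((2 - A) * y + 2 * (1 - A)) = A * y :=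
        min_eq_left (by nlinarith [hy'.1, hy'.2])
      rw [e1, e2, min_eq_left (le_max_left _ _)]
      ring
    · rw [if_neg (by rintro ⟨-, h⟩; linarith)]
      rcases le_or_gt |y| 2 with hy2 | hy2
      · have hz : zz y = y := by
          have := abs_le.mp hy2
          rw [zz, min_eq_right (by linarith), max_eq_right (by linarith)]
        rw [if_pos ⟨hx, hy2⟩, ballF, ha, hz]
        rcases le_or_gt y 0 with hy0 | hy0
        · have hyneg : y < -1 := by
            rcases abs_cases y with ⟨h1, _⟩ | ⟨h1, _⟩ <;> linarith
          have hay : |y| = -y := abs_of_neg (by linarith)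
          rw [hay, Real.sign_of_neg (by linarith)]
          have e1 : max (A * y) ((2 - A) * y - 2 * (1 - A)) = A * y :=
            max_eq_left (by nlinarith)
          have e2 : min (A * y) ((2 - A) * y + 2 * (1 - A)) =
              (2 - A) * y + 2 * (1 - A) := min_eq_right (by nlinarith)
          have e3 : max ((2 - A) * y + 2 * (1 - A)) y =
              (2 - A) * y + 2 * (1 - A) := max_eq_left (by nlinarith)
          rw [e1, e2, e3, min_eq_right (by nlinarith)]
          ring
        · have hypos : 1 < y := by
            rcases abs_cases y with ⟨h1, _⟩ | ⟨h1, _⟩ <;> linarith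
          have hay : |y| = y := abs_of_pos hy0
          rw [hay, Real.sign_of_pos hy0]
          have e1 : max (A * y) ((2 - A) * y - 2 * (1 - A)) =
              (2 - A) * y - 2 * (1 - A) := max_eq_right (by nlinarith)
          have e2 : min (A * y) ((2 - A) * y + 2 * (1 - A)) = A * y :=
            min_eq_left (by nlinarith)
          have e3 : max (A * y) y = y := max_eq_right (by nlinarith)
          rw [e1, e2, e3, min_eq_left (by nlinarith)]
          ring
      · rw [if_neg (by rintro ⟨-, h⟩; linarith), ballF, ha]
        rcases le_or_gt y 0 with hy0 | hy0
        · have hyneg : y < -2 := by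
            rcases abs_cases y with ⟨h1, _⟩ | ⟨h1, _⟩ <;> linarith
          have hz : zz y = -2 := by
            rw [zz, min_eq_right (by linarith), max_eq_left (by linarith)]
          rw [hz]
          have e1 : max (A * (-2)) ((2 - A) * (-2) - 2 * (1 - A)) = A * (-2) :=
            max_eq_left (by nlinarith)
          have e2 : min (A * (-2)) ((2 - A) * (-2) + 2 * (1 - A)) =
              (2 - A) * (-2) + 2 * (1 - A) := min_eq_right (by nlinarith)
          have e3 : max ((2 - A) * (-2) + 2 * (1 - A)) (-2 : ℝ) =
              (2 - A) * (-2) + 2 * (1 - A) := max_eq_left (by nlinarith)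
          rw [e1, e2, e3, e2]
          ring
        · have hypos : 2 < y := by
            rcases abs_cases y with ⟨h1, _⟩ | ⟨h1, _⟩ <;> linarith
          have hz : zz y = 2 := by
            rw [zz, min_eq_left (by linarith), max_eq_right (by linarith)]
          rw [hz]
          have e1 : max (A * 2) ((2 - A) * 2 - 2 * (1 - A)) =
              (2 - A) * 2 - 2 * (1 - A) := max_eq_right (by nlinarith)
          have e2 : min (A * 2) ((2 - A) * 2 + 2 * (1 - A)) = A * 2 :=
            min_eq_left (by nlinarith)
          have e3 : max (A * 2) (2:ℝ) = 2 := max_eq_right (by nlinarith)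
          rw [e1, e2, e3, min_eq_right (by nlinarith)]
          ring
  · have ha : aa x = 1 := min_eq_right (by linarith)
    rw [if_neg (by rintro ⟨h, -⟩; linarith), if_neg (by rintro ⟨h, -⟩; linarith),
        ballF, ha]
    have h1 : (1:ℝ) * zz y = zz y := one_mul _
    have h2 : (2 - 1) * zz y - 2 * (1 - 1) = zz y := by ring
    have h3 : (2 - 1) * zz y + 2 * (1 - 1) = zz y := by ring
    rw [h1, h2, h3, max_self, min_self, max_self, min_self]
    ring

lemma ballF_lip (x y x' y' : ℝ) :
    |ballF x y - ballF x' y'| ≤ 4 * (|x - x'| + |y - y'|) := by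
  obtain ⟨ha0, ha1⟩ := aa_mem x
  obtain ⟨ha0', ha1'⟩ := aa_mem x'
  obtain ⟨hz0, hz1⟩ := zz_mem y
  obtain ⟨hz0', hz1'⟩ := zz_mem y'
  have hda := aa_lip x x'
  have hdz := zz_lip y y'
  set a := aa x; set a' := aa x'; set z := zz y; set z' := zz y'
  set B := 2 * |z - z'| + 4 * |a - a'| with hB
  have h1 : |a * z - a' * z'| ≤ B := by
    have e : a * z - a' * z' = a * (z - z') + z' * (a - a') := by ring
    rw [e]
    refine (abs_add_le _ _).trans ?_
    rw [abs_mul, abs_mul, hB]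
    have l1 : |a| ≤ 1 := abs_le.mpr ⟨by linarith, ha1⟩
    have l2 : |z'| ≤ 2 := abs_le.mpr ⟨hz0', hz1'⟩
    nlinarith [abs_nonneg (z - z'), abs_nonneg (a - a')]
  have h2 : |((2 - a) * z - 2 * (1 - a)) - ((2 - a') * z' - 2 * (1 - a'))| ≤ B := by
    have e : ((2 - a) * z - 2 * (1 - a)) - ((2 - a') * z' - 2 * (1 - a'))
        = (2 - a) * (z - z') + (-(z' - 2)) * (a - a') := by ring
    rw [e]
    refine (abs_add_le _ _).trans ?_
    rw [abs_mul, abs_mul, hB]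
    have l1 : |2 - a| ≤ 2 := abs_le.mpr ⟨by linarith, by linarith⟩
    have l2 : |(-(z' - 2))| ≤ 4 := abs_le.mpr ⟨by linarith, by linarith⟩
    nlinarith [abs_nonneg (z - z'), abs_nonneg (a - a')]
  have h3 : |((2 - a) * z + 2 * (1 - a)) - ((2 - a') * z' + 2 * (1 - a'))| ≤ B := by
    have e : ((2 - a) * z + 2 * (1 - a)) - ((2 - a') * z' + 2 * (1 - a'))
        = (2 - a) * (z - z') + (-(z' + 2)) * (a - a') := by ring
    rw [e]
    refine (abs_add_le _ _).trans ?_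
    rw [abs_mul, abs_mul, hB]
    have l1 : |2 - a| ≤ 2 := abs_le.mpr ⟨by linarith, by linarith⟩
    have l2 : |(-(z' + 2))| ≤ 4 := abs_le.mpr ⟨by linarith, by linarith⟩
    nlinarith [abs_nonneg (z - z'), abs_nonneg (a - a')]
  have hzB : |z - z'| ≤ B := by
    rw [hB]; nlinarith [abs_nonneg (z - z'), abs_nonneg (a - a')]
  have hmax1 : |max (a * z) ((2 - a) * z - 2 * (1 - a))
      - max (a' * z') ((2 - a') * z' - 2 * (1 - a'))| ≤ B :=
    (abs_max_sub_max_le_max _ _ _ _).trans (max_le h1 h2)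
  have hmin1 : |min (a * z) ((2 - a) * z + 2 * (1 - a))
      - min (a' * z') ((2 - a') * z' + 2 * (1 - a'))| ≤ B :=
    (abs_min_sub_min_le_max _ _ _ _).trans (max_le h1 h3)
  have hmax2 : |max (min (a * z) ((2 - a) * z + 2 * (1 - a))) z
      - max (min (a' * z') ((2 - a') * z' + 2 * (1 - a'))) z'| ≤ B :=
    (abs_max_sub_max_le_max _ _ _ _).trans (max_le hmin1 hzB)
  have hmin2 : |min (max (a * z) ((2 - a) * z - 2 * (1 - a)))
        (max (min (a * z) ((2 - a) * z + 2 * (1 - a))) z)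
      - min (max (a' * z') ((2 - a') * z' - 2 * (1 - a')))
        (max (min (a' * z') ((2 - a') * z' + 2 * (1 - a'))) z')| ≤ B :=
    (abs_min_sub_min_le_max _ _ _ _).trans (max_le hmax1 hmax2)
  have e : ballF x y - ballF x' y' = ((y - y') - (z - z'))
      + (min (max (a * z) ((2 - a) * z - 2 * (1 - a)))
        (max (min (a * z) ((2 - a) * z + 2 * (1 - a))) z)
      - min (max (a' * z') ((2 - a') * z' - 2 * (1 - a')))
        (max (min (a' * z') ((2 - a') * z' + 2 * (1 - a'))) z')) := by
    rw [ballF, ballF]; ring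
  rw [e]
  refine (abs_add_le _ _).trans ?_
  have hb : |(y - y') - (z - z')| ≤ |y - y'| + |z - z'| := abs_sub _ _
  linarith [hdz, hda, hmin2, hb]

/-! ### Auxiliary lemmas on `E2` -/

lemma coord_dist (q p : E2) (i : Fin 2) : |q i - p i| ≤ dist q p := by
  rw [EuclideanSpace.dist_eq]
  have h1 : |q i - p i| = Real.sqrt (dist (q i) (p i) ^ 2) := by
    rw [Real.sqrt_sq_eq_abs, Real.dist_eq, abs_abs]
  rw [h1]
  apply Real.sqrt_le_sqrt
  exact Finset.single_le_sum (f := fun j => dist (q j) (p j) ^ 2)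
    (fun j _ => sq_nonneg _) (Finset.mem_univ i)

lemma sqrt_le_abs_add (a b : ℝ) : Real.sqrt (a ^ 2 + b ^ 2) ≤ |a| + |b| := by
  rw [show |a| + |b| = Real.sqrt ((|a| + |b|) ^ 2) by
    rw [Real.sqrt_sq (by positivity)]]
  apply Real.sqrt_le_sqrt
  nlinarith [mul_nonneg (abs_nonneg a) (abs_nonneg b), sq_abs a, sq_abs b]

lemma sign_mul_abs' (y : ℝ) (hy : y ≠ 0) : Real.sign y * |y| = y := by
  rcases lt_or_gt_of_ne hy with h | h
  · rw [Real.sign_of_neg h, abs_of_neg h]; ring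
  · rw [Real.sign_of_pos h, abs_of_pos h]; ring

lemma e2_decomp (u v : ℝ) :
    (EuclideanSpace.equiv (Fin 2) ℝ).symm ![u, v]
      = u • EuclideanSpace.single (0 : Fin 2) (1:ℝ)
        + v • EuclideanSpace.single (1 : Fin 2) (1:ℝ) := by
  ext i
  fin_cases i <;> simp [EuclideanSpace.single_apply]

/-! ### The candidate derivative -/

def P0 : E2 →L[ℝ] ℝ := EuclideanSpace.proj (0 : Fin 2)
def P1 : E2 →L[ℝ] ℝ := EuclideanSpace.proj (1 : Fin 2)

def DD (s : ℝ) (p : E2) : E2 →L[ℝ] E2 :=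
  (P0.smulRight (EuclideanSpace.single (0 : Fin 2) (1:ℝ)))
  + ((s • ((p 0) • P1 + (p 1) • P0)).smulRight (EuclideanSpace.single (1 : Fin 2) (1:ℝ)))

lemma hasfderiv_g (s : ℝ) (p : E2) :
    HasFDerivAt (fun q : E2 => (q 0) • EuclideanSpace.single (0 : Fin 2) (1:ℝ)
      + (s * (q 0 * q 1)) • EuclideanSpace.single (1 : Fin 2) (1:ℝ)) (DD s p) p := by
  have h0 : HasFDerivAt (fun q : E2 => q 0) P0 p := (P0).hasFDerivAt
  have h1 : HasFDerivAt (fun q : E2 => q 1) P1 p := (P1).hasFDerivAt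
  have h01 : HasFDerivAt (fun q : E2 => q 0 * q 1) ((p 0) • P1 + (p 1) • P0) p := h0.mul h1
  have hs : HasFDerivAt (fun q : E2 => s * (q 0 * q 1)) (s • ((p 0) • P1 + (p 1) • P0)) p :=
    h01.const_mul s
  exact (h0.smul_const _).add (hs.smul_const _)

lemma DD_apply (s : ℝ) (p u : E2) :
    DD s p u = (u 0) • EuclideanSpace.single (0 : Fin 2) (1:ℝ)
    + (s * (p 0 * u 1 + p 1 * u 0)) • EuclideanSpace.single (1 : Fin 2) (1:ℝ) := by
  simp [DD, P0, P1, mul_comm, mul_add]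

lemma DD_det (s : ℝ) (p : E2) : (DD s p).det = s * p 0 := by
  have h : (DD s p).det = LinearMap.det ((DD s p) : E2 →ₗ[ℝ] E2) := rfl
  rw [h]
  let b := PiLp.basisFun 2 ℝ (Fin 2)
  rw [← LinearMap.det_toMatrix b]
  have hM : LinearMap.toMatrix b b ((DD s p) : E2 →ₗ[ℝ] E2) = !![1, 0; s * p 1, s * p 0] := by
    ext i j
    fin_cases i <;> fin_cases j <;>
      simp [LinearMap.toMatrix_apply, b, DD, P0, P1, EuclideanSpace.single_apply]
  rw [hM, Matrix.det_fin_two_of]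
  ring

lemma DD_coord (s : ℝ) (p u : E2) :
    (DD s p u) 0 = u 0 ∧ (DD s p u) 1 = s * (p 0 * u 1 + p 1 * u 0) := by
  rw [DD_apply]
  constructor <;> simp [EuclideanSpace.single_apply]

lemma DD_norm (s : ℝ) (p : E2) (hs : s ^ 2 = 1) (h0 : |p 0| ≤ 1) (h1 : |p 1| ≤ 1) :
    ‖DD s p‖ ≤ Real.sqrt 3 := by
  refine ContinuousLinearMap.opNorm_le_bound _ (Real.sqrt_nonneg 3) fun u => ?_
  obtain ⟨hw0, hw1⟩ := DD_coord s p u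
  simp only [EuclideanSpace.norm_eq, Fin.sum_univ_two]
  rw [hw0, hw1, ← Real.sqrt_mul (by norm_num : (0:ℝ) ≤ 3)]
  apply Real.sqrt_le_sqrt
  simp only [Real.norm_eq_abs, sq_abs]
  obtain ⟨hp0l, hp0r⟩ := abs_le.mp h0
  obtain ⟨hp1l, hp1r⟩ := abs_le.mp h1
  have e : (s * (p 0 * u 1 + p 1 * u 0)) ^ 2 = (p 0 * u 1 + p 1 * u 0) ^ 2 := by
    rw [mul_pow, hs, one_mul]
  rw [e]
  nlinarith [sq_nonneg (p 0 * u 1 - p 1 * u 0),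
    mul_nonneg (by nlinarith : (0:ℝ) ≤ 1 - p 0 ^ 2) (sq_nonneg (u 1)),
    mul_nonneg (by nlinarith : (0:ℝ) ≤ 1 - p 1 ^ 2) (sq_nonneg (u 0)),
    sq_nonneg (u 0), sq_nonneg (u 1)]

/-- **Basic properties of Ball's map** (from the proof of Proposition 6.1). -/
theorem ball_map_basic_properties
    (η : ℝ → ℝ → ℝ)
    (hη : ∀ x y : ℝ, η x y =
      if |x| ≤ 1 ∧ |y| ≤ 1 then |x| * y
      else if |x| ≤ 1 ∧ |y| ≤ 2 then (2 * (|y| - 1) + |x| * (2 - |y|)) * Real.sign y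
      else y)
    (f₀ : E2 → E2)
    (hf₀ : ∀ p : E2, f₀ p =
      (EuclideanSpace.equiv (Fin 2) ℝ).symm ![p 0, η (p 0) (p 1)]) :
    (∃ C : ℝ≥0, LipschitzWith C f₀) ∧
    (∀ p : E2, 1 ≤ |p 0| ∨ 2 ≤ |p 1| → f₀ p = p) ∧
    (f₀ ⁻¹' {0} = {p : E2 | p 0 = 0 ∧ p 1 ∈ Icc (-1 : ℝ) 1}) ∧
    (∃ y x : E2, AccPt x (Filter.principal (f₀ ⁻¹' {y}))) ∧
    (∀ p : E2, 0 < |p 0| → |p 0| < 1 → |p 1| < 1 →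
      ∃ D : E2 →L[ℝ] E2, HasFDerivAt f₀ D p ∧
        D.det = |p 0| ∧ ‖D‖ ^ 2 ≤ 3 ∧ ‖D‖ ^ 2 ≤ (3 / |p 0|) * D.det) := by
  have hη' : ∀ x y : ℝ, η x y = ballF x y := fun x y => by rw [hη]; exact eta_cf x y
  have hc0 : ∀ r : E2, (f₀ r) 0 = r 0 := fun r => by rw [hf₀]; rfl
  have hc1 : ∀ r : E2, (f₀ r) 1 = η (r 0) (r 1) := fun r => by rw [hf₀]; rfl
  -- Part 1: Lipschitz
  have part1 : ∃ C : ℝ≥0, LipschitzWith C f₀ := by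
    refine ⟨9, ?_⟩
    rw [lipschitzWith_iff_dist_le_mul]
    intro p q
    have hd : dist (f₀ p) (f₀ q)
        ≤ |p 0 - q 0| + |η (p 0) (p 1) - η (q 0) (q 1)| := by
      rw [EuclideanSpace.dist_eq, Fin.sum_univ_two, hc0, hc0, hc1, hc1,
        Real.dist_eq, Real.dist_eq]
      simp only [sq_abs]
      have := sqrt_le_abs_add (p 0 - q 0) (η (p 0) (p 1) - η (q 0) (q 1))
      rw [abs_sub_comm (p 0) (q 0)] at *
      exact this
    have hb : |η (p 0) (p 1) - η (q 0) (q 1)| ≤ 4 * (|p 0 - q 0| + |p 1 - q 1|) := by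
      rw [hη', hη']; exact ballF_lip _ _ _ _
    have d0 : |p 0 - q 0| ≤ dist p q := coord_dist p q 0
    have d1 : |p 1 - q 1| ≤ dist p q := coord_dist p q 1
    have h9 : ((9:ℝ≥0):ℝ) = 9 := by norm_num
    rw [h9]
    linarith
  -- Part 2: identity outside
  have part2 : ∀ p : E2, 1 ≤ |p 0| ∨ 2 ≤ |p 1| → f₀ p = p := by
    intro p hp
    have hval : η (p 0) (p 1) = p 1 := by
      rw [hη]
      split_ifs with h1 h2
      · rcases hp with hp | hp
        · rw [le_antisymm h1.1 hp, one_mul]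
        · linarith [h1.2]
      · rcases hp with hp | hp
        · have hx1 : |p 0| = 1 := le_antisymm h2.1 hp
          have hy1 : 1 < |p 1| := by
            by_contra hc
            exact h1 ⟨h2.1, le_of_not_gt hc⟩
          have hyne : p 1 ≠ 0 := by
            intro hz; rw [hz, abs_zero] at hy1; linarith
          rw [hx1]
          have e : 2 * (|p 1| - 1) + 1 * (2 - |p 1|) = |p 1| := by ring
          rw [e, mul_comm, sign_mul_abs' _ hyne]
        · have hy2 : |p 1| = 2 := le_antisymm h2.2 hp
          have hyne : p 1 ≠ 0 := by
            intro h; rw [h, abs_zero] at hy2; norm_num at hy2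
          rw [hy2]
          have e : 2 * ((2:ℝ) - 1) + |p 0| * (2 - 2) = |p 1| := by rw [hy2]; ring
          rw [e, mul_comm, sign_mul_abs' _ hyne]
      · rfl
    rw [hf₀, hval]
    ext i
    fin_cases i <;> rfl
  -- Part 3: fiber over the origin
  have part3 : f₀ ⁻¹' {0} = {p : E2 | p 0 = 0 ∧ p 1 ∈ Icc (-1 : ℝ) 1} := by
    ext p
    simp only [Set.mem_preimage, Set.mem_singleton_iff, Set.mem_setOf_eq, Set.mem_Icc]
    constructor
    · intro h
      have h0 : p 0 = 0 := by rw [← hc0 p, h]; rfl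
      have h1 : η (p 0) (p 1) = 0 := by rw [← hc1 p, h]; rfl
      rw [h0] at h1 ⊢
      refine ⟨rfl, ?_⟩
      rw [hη] at h1
      have h01 : |(0:ℝ)| ≤ 1 := by simp
      split_ifs at h1 with hA hB
      · exact abs_le.mp hA.2
      · exfalso
        have hy1 : 1 < |p 1| := by
          by_contra hc
          exact hA ⟨h01, le_of_not_gt hc⟩
        simp only [abs_zero, zero_mul, add_zero] at h1
        rcases mul_eq_zero.mp h1 with h | h
        · linarith
        · have : p 1 = 0 := Real.sign_eq_zero_iff.mp h
          rw [this, abs_zero] at hy1; linarith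
      · exfalso
        have : ¬ |p 1| ≤ 2 := fun hc => hB ⟨h01, hc⟩
        rw [h1, abs_zero] at this
        exact this (by norm_num)
    · rintro ⟨h0, h1, h2⟩
      have hval : η (p 0) (p 1) = 0 := by
        rw [h0, hη]
        rw [if_pos ⟨by simp, abs_le.mpr ⟨h1, h2⟩⟩]
        simp
      rw [hf₀, hval, h0]
      ext i
      fin_cases i <;> rfl
  -- Part 4: accumulation point
  have part4 : ∃ y x : E2, AccPt x (Filter.principal (f₀ ⁻¹' {y})) := by
    refine ⟨0, 0, ?_⟩
    rw [part3, accPt_iff_nhds]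
    intro U hU
    rcases Metric.mem_nhds_iff.mp hU with ⟨ε, hε, hball⟩
    set δ : ℝ := min (ε / 2) 1 with hδ
    have hδ0 : 0 < δ := lt_min (by linarith) one_pos
    have hδ1 : δ ≤ 1 := min_le_right _ _
    have hδε : δ < ε := lt_of_le_of_lt (min_le_left _ _) (by linarith)
    refine ⟨EuclideanSpace.single (1 : Fin 2) δ, ⟨?_, ?_⟩, ?_⟩
    · apply hball
      rw [Metric.mem_ball, dist_zero_right, EuclideanSpace.norm_single,
        Real.norm_eq_abs, abs_of_pos hδ0]
      exact hδε
    · constructor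
      · simp [EuclideanSpace.single_apply]
      · have he : (EuclideanSpace.single (1 : Fin 2) δ) 1 = δ := by
          simp [EuclideanSpace.single_apply]
        rw [Set.mem_Icc, he]
        constructor <;> linarith
    · intro h
      have : (EuclideanSpace.single (1 : Fin 2) δ) 1 = (0 : E2) 1 := by rw [h]
      simp [EuclideanSpace.single_apply] at this
      exact absurd this (ne_of_gt hδ0)
  -- Part 5: derivative
  refine ⟨part1, part2, part3, part4, ?_⟩
  intro p hp0 hp1 hp2
  have hp0ne : p 0 ≠ 0 := by
    intro h; rw [h, abs_zero] at hp0; exact lt_irrefl _ hp0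
  set s : ℝ := Real.sign (p 0) with hsdef
  have hsprop : (s = 1 ∧ 0 < p 0) ∨ (s = -1 ∧ p 0 < 0) := by
    rcases lt_or_gt_of_ne hp0ne with h | h
    · exact Or.inr ⟨Real.sign_of_neg h, h⟩
    · exact Or.inl ⟨Real.sign_of_pos h, h⟩
  have hs2 : s ^ 2 = 1 := by rcases hsprop with ⟨h, -⟩ | ⟨h, -⟩ <;> rw [h] <;> norm_num
  have hsp : s * p 0 = |p 0| := by
    rcases hsprop with ⟨h, h'⟩ | ⟨h, h'⟩ <;> rw [h]
    · rw [one_mul, abs_of_pos h']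
    · rw [abs_of_neg h']; ring
  refine ⟨DD s p, ?_, ?_, ?_, ?_⟩
  · -- HasFDerivAt
    apply (hasfderiv_g s p).congr_of_eventuallyEq
    set r : ℝ := min (min (1 - |p 0|) (1 - |p 1|)) |p 0| with hr
    have hrpos : 0 < r := lt_min (lt_min (by linarith) (by linarith)) hp0
    filter_upwards [Metric.ball_mem_nhds p hrpos] with q hq
    rw [Metric.mem_ball] at hq
    have d0 : |q 0 - p 0| ≤ dist q p := coord_dist q p 0
    have d1 : |q 1 - p 1| ≤ dist q p := coord_dist q p 1
    have hr1 : r ≤ 1 - |p 0| := le_trans (min_le_left _ _) (min_le_left _ _)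
    have hr2 : r ≤ 1 - |p 1| := le_trans (min_le_left _ _) (min_le_right _ _)
    have hr3 : r ≤ |p 0| := min_le_right _ _
    have hq0 : |q 0| ≤ 1 := by
      calc |q 0| = |p 0 + (q 0 - p 0)| := by ring_nf
        _ ≤ |p 0| + |q 0 - p 0| := abs_add_le _ _
        _ ≤ 1 := by linarith
    have hq1 : |q 1| ≤ 1 := by
      calc |q 1| = |p 1 + (q 1 - p 1)| := by ring_nf
        _ ≤ |p 1| + |q 1 - p 1| := abs_add_le _ _
        _ ≤ 1 := by linarith
    have hsq : |q 0| = s * q 0 := by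
      obtain ⟨hdl, hdr⟩ := abs_lt.mp (lt_of_le_of_lt d0 hq)
      rcases hsprop with ⟨h, h'⟩ | ⟨h, h'⟩ <;> rw [h]
      · rw [abs_of_pos h'] at hr3
        rw [one_mul, abs_of_pos (by linarith : 0 < q 0)]
      · rw [abs_of_neg h'] at hr3
        rw [abs_of_neg (by linarith : q 0 < 0)]; ring
    rw [hf₀, hη, if_pos ⟨hq0, hq1⟩, e2_decomp, hsq]
    rw [show s * q 0 * q 1 = s * (q 0 * q 1) by ring]
  · rw [DD_det, hsp]
  · have hn := DD_norm s p hs2 hp1.le hp2.le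
    calc ‖DD s p‖ ^ 2 ≤ Real.sqrt 3 ^ 2 :=
          pow_le_pow_left₀ (norm_nonneg _) hn 2
      _ = 3 := Real.sq_sqrt (by norm_num)
  · rw [DD_det, hsp, div_mul_cancel₀ 3 (ne_of_gt hp0)]
    have hn := DD_norm s p hs2 hp1.le hp2.le
    calc ‖DD s p‖ ^ 2 ≤ Real.sqrt 3 ^ 2 :=
          pow_le_pow_left₀ (norm_nonneg _) hn 2
      _ = 3 := Real.sq_sqrt (by norm_num)
end
end
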